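/- arXiv:0910.3204 — 5 statements merged into one kernel-verified Lean document; each statement's English description precedes it below -/
import Mathlib

section
/- The function Q(x) = (5/2)^{1/3} · cosh^{-2/3}(3x/2) satisfies the ODE Q'' + Q^4 = Q on ℝ. -/
noncomputable def Q : ℝ → ℝ := fun x => (5/2 : ℝ) ^ ((1:ℝ)/3) * (Real.cosh (3*x/2)) ^ (-(2:ℝ)/3)

/-!
For `f x = c * cosh (k * x) ^ a`, using `sinh ^ 2 = cosh ^ 2 - 1` one finds
`f'' = a² k² f - a (a - 1) k² c cosh (k x) ^ (a - 2)`. For `k = 3/2`, `a = -2/3` this reads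
`Q'' = Q - (5/2) c cosh ^ (-8/3)`, and since `c = (5/2) ^ (1/3)` satisfies `c ^ 3 = 5/2`,
the correction term is exactly `-Q ^ 4`.
-/

open Real

section CoshRpow

variable (c k a : ℝ)

theorem hasDerivAt_cosh_mul_rpow (x : ℝ) :
    HasDerivAt (fun x => cosh (k * x) ^ a) (a * k * sinh (k * x) * cosh (k * x) ^ (a - 1)) x := by
  have := ((hasDerivAt_const_mul k).cosh).rpow_const (p := a) (Or.inl (cosh_pos (k * x)).ne')
  convert this using 1
  ring

theorem deriv_const_mul_cosh_mul_rpow :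
    deriv (fun x => c * cosh (k * x) ^ a) =
      fun x => c * a * k * (sinh (k * x) * cosh (k * x) ^ (a - 1)) := by
  funext x
  convert ((hasDerivAt_cosh_mul_rpow k a x).const_mul c).deriv using 1
  ring

theorem hasDerivAt_sinh_mul_cosh_mul_rpow_sub_one (x : ℝ) :
    HasDerivAt (fun x => sinh (k * x) * cosh (k * x) ^ (a - 1))
      (a * k * cosh (k * x) ^ a - (a - 1) * k * cosh (k * x) ^ (a - 2)) x := by
  have hpos := cosh_pos (k * x)
  have hmul : cosh (k * x) * cosh (k * x) ^ (a - 1) = cosh (k * x) ^ a := by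
    rw [mul_comm, ← rpow_add_one hpos.ne', sub_add_cancel]
  have hsq : cosh (k * x) ^ 2 * cosh (k * x) ^ (a - 2) = cosh (k * x) ^ a := by
    rw [← rpow_natCast, ← rpow_add hpos]
    norm_num
  refine ((hasDerivAt_const_mul k).sinh.mul (hasDerivAt_cosh_mul_rpow k (a - 1) x)).congr_deriv ?_
  rw [show a - 1 - 1 = a - 2 by ring]
  linear_combination k * hmul - (a - 1) * k * cosh (k * x) ^ (a - 2) * cosh_sq_sub_sinh_sq (k * x)
    + (a - 1) * k * hsq

theorem deriv_deriv_const_mul_cosh_mul_rpow (x : ℝ) :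
    deriv (deriv fun x => c * cosh (k * x) ^ a) x =
      a ^ 2 * k ^ 2 * (c * cosh (k * x) ^ a) -
        a * (a - 1) * k ^ 2 * c * cosh (k * x) ^ (a - 2) := by
  rw [deriv_const_mul_cosh_mul_rpow,
    ((hasDerivAt_sinh_mul_cosh_mul_rpow_sub_one k a x).const_mul (c * a * k)).deriv]
  ring

end CoshRpow

theorem rpow_one_third_pow_four {y : ℝ} (hy : 0 ≤ y) :
    (y ^ ((1 : ℝ) / 3)) ^ 4 = y * y ^ ((1 : ℝ) / 3) := by
  rw [← rpow_mul_natCast hy, ← rpow_one_add' hy (by norm_num)]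
  norm_num

theorem Q_ode : ∀ x : ℝ, deriv (deriv Q) x + (Q x)^4 = Q x := by
  intro x
  have hQ : Q = fun x => (5/2 : ℝ) ^ ((1:ℝ)/3) * cosh (3/2 * x) ^ (-(2:ℝ)/3) := by
    funext x
    rw [Q, mul_div_right_comm]
  have hpow : (cosh (3/2 * x) ^ (-(2:ℝ)/3)) ^ 4 = cosh (3/2 * x) ^ (-(2:ℝ)/3 - 2) := by
    rw [← rpow_mul_natCast (cosh_pos _).le]
    norm_num
  rw [hQ, deriv_deriv_const_mul_cosh_mul_rpow, mul_pow, hpow, rpow_one_third_pow_four (by norm_num)]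
  ring
end

section
/- The function Q satisfies the first-order identity (Q')^2 + (2/5)·Q^5 = Q^2 on ℝ. -/
/-!
Since `Q` is a constant multiple of a power of `cosh (3x/2)`, its logarithmic derivative is a
multiple of `tanh`, namely `Q' = -Q tanh (3x/2)`, and `Q³ = (5/2) / cosh² (3x/2)`. Then
`Q'² = Q² (1 - 1 / cosh²) = Q² - (2/5) Q⁵`.
-/

open Real

theorem HasDerivAt.cosh_rpow {f : ℝ → ℝ} {f' x : ℝ} (hf : HasDerivAt f f' x) (p : ℝ) :
    HasDerivAt (fun y => Real.cosh (f y) ^ p) (p * f' * tanh (f x) * Real.cosh (f x) ^ p) x := by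
  have hc : Real.cosh (f x) ≠ 0 := (cosh_pos _).ne'
  convert hf.cosh.rpow_const (p := p) (Or.inl hc) using 1
  rw [rpow_sub_one hc, tanh_eq_sinh_div_cosh]
  ring

theorem hasDerivAt_Q (x : ℝ) : HasDerivAt Q (-Q x * tanh (3 * x / 2)) x := by
  have hlin : HasDerivAt (fun y : ℝ => 3 * y / 2) (3 / 2) x := by
    simpa using ((hasDerivAt_id x).const_mul (3 : ℝ)).div_const 2
  refine ((hlin.cosh_rpow (-(2:ℝ)/3)).const_mul ((5/2 : ℝ) ^ ((1:ℝ)/3))).congr_deriv ?_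
  simp only [Q]
  ring

theorem Q_pow_three (x : ℝ) : Q x ^ 3 = 5 / 2 / cosh (3 * x / 2) ^ 2 := by
  have hc : 0 ≤ cosh (3 * x / 2) := (cosh_pos _).le
  simp only [Q]
  rw [mul_pow, ← rpow_natCast, ← rpow_natCast (_ ^ _), ← rpow_mul (by norm_num), ← rpow_mul hc]
  norm_num [div_eq_mul_inv]

theorem Q_first_order : ∀ x : ℝ, (deriv Q x)^2 + (2/5) * (Q x)^5 = (Q x)^2 := by
  intro x
  have hc : cosh (3 * x / 2) ≠ 0 := (cosh_pos _).ne'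
  have hQ3 := Q_pow_three x
  rw [(hasDerivAt_Q x).deriv, tanh_eq_sinh_div_cosh]
  field_simp at hQ3 ⊢
  linear_combination 5 * Q x ^ 2 * sinh_sq (3 * x / 2) + Q x ^ 2 * hQ3
end

section
/- For every real r ≥ 1, ∫_ℝ Q^{r+3} dx = (5r/(2r+3)) · ∫_ℝ Q^r dx. -/
open Real MeasureTheory Filter Topology Set

lemma exp_abs_div_two_le_cosh (x : ℝ) : exp |x| / 2 ≤ cosh x := by
  rw [← cosh_abs, cosh_eq]
  linarith [exp_pos (-|x|)]

lemma tendsto_cosh_cocompact : Tendsto cosh (cocompact ℝ) atTop :=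
  tendsto_atTop_mono exp_abs_div_two_le_cosh <|
    (tendsto_exp_atTop.comp tendsto_norm_cocompact_atTop).atTop_div_const two_pos

lemma cosh_rpow_neg_le {s : ℝ} (hs : 0 ≤ s) (x : ℝ) :
    cosh x ^ (-s) ≤ 2 ^ s * exp (-s * |x|) :=
  calc cosh x ^ (-s) ≤ (exp |x| / 2) ^ (-s) :=
        rpow_le_rpow_of_nonpos (by positivity) (exp_abs_div_two_le_cosh x) (neg_nonpos.2 hs)
    _ = 2 ^ s * exp (-s * |x|) := by
        rw [div_rpow (exp_pos _).le zero_le_two, ← exp_mul, rpow_neg zero_le_two, div_inv_eq_mul,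
          mul_comm, mul_comm |x|]

lemma integrable_cosh_rpow_neg {s : ℝ} (hs : 0 < s) :
    Integrable fun x : ℝ => cosh x ^ (-s) := by
  have hcont : Continuous fun x : ℝ => cosh x ^ (-s) :=
    continuous_cosh.rpow_const fun x => Or.inl (cosh_pos x).ne'
  refine hcont.locallyIntegrable.integrable_of_isBigO_atTop_of_norm_isNegInvariant
    (g := fun x => exp (-s * x)) (.of_forall fun x => by simp) ?_
    ⟨Ioi 0, Ioi_mem_atTop 0, exp_neg_integrableOn_Ioi 0 hs⟩
  refine .of_bound (2 ^ s) ?_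
  filter_upwards [eventually_ge_atTop 0] with x hx
  rw [norm_of_nonneg (by positivity), norm_of_nonneg (exp_pos _).le]
  simpa only [abs_of_nonneg hx] using cosh_rpow_neg_le hs.le x

lemma hasDerivAt_sinh_mul_cosh_rpow (s x : ℝ) :
    HasDerivAt (fun x => sinh x * cosh x ^ (-(s + 1)))
      ((s + 1) * cosh x ^ (-(s + 2)) - s * cosh x ^ (-s)) x := by
  have hc : cosh x ≠ 0 := (cosh_pos x).ne'
  refine ((hasDerivAt_sinh x).mul ((hasDerivAt_cosh x).rpow_const (Or.inl hc))).congr_deriv ?_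
  have h1 : cosh x ^ (-(s + 1)) = cosh x ^ (-(s + 2)) * cosh x := by
    rw [← rpow_add_one hc]; ring_nf
  have h2 : cosh x ^ (-s) = cosh x ^ (-(s + 2)) * cosh x ^ 2 := by
    rw [← rpow_add_natCast hc]; push_cast; ring_nf
  rw [show -(s + 1) - 1 = -(s + 2) by ring, h1, h2]
  linear_combination (s + 1) * cosh x ^ (-(s + 2)) * cosh_sq x

lemma tendsto_sinh_mul_cosh_rpow_cocompact {s : ℝ} (hs : 0 < s) :
    Tendsto (fun x => sinh x * cosh x ^ (-(s + 1))) (cocompact ℝ) (𝓝 0) := by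
  refine squeeze_zero_norm (fun x => ?_) ((tendsto_rpow_neg_atTop hs).comp tendsto_cosh_cocompact)
  have hc := cosh_pos x
  rw [norm_mul, norm_of_nonneg (rpow_pos_of_pos hc _).le, norm_eq_abs, Function.comp_apply,
    show -s = 1 + -(s + 1) by ring, rpow_add hc, rpow_one]
  gcongr
  rw [abs_sinh, ← cosh_abs x]
  exact (sinh_lt_cosh _).le

theorem integral_cosh_rpow_neg_add_two {s : ℝ} (hs : 0 < s) :
    (s + 1) * ∫ x, cosh x ^ (-(s + 2)) = s * ∫ x, cosh x ^ (-s) := by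
  have hI₀ := integrable_cosh_rpow_neg hs
  have hI₂ := integrable_cosh_rpow_neg (show 0 < s + 2 by linarith)
  have h := integral_of_hasDerivAt_of_tendsto (hasDerivAt_sinh_mul_cosh_rpow s)
    ((hI₂.const_mul _).sub (hI₀.const_mul _))
    ((tendsto_sinh_mul_cosh_rpow_cocompact hs).mono_left atBot_le_cocompact)
    ((tendsto_sinh_mul_cosh_rpow_cocompact hs).mono_left atTop_le_cocompact)
  rw [integral_sub (hI₂.const_mul _) (hI₀.const_mul _), integral_const_mul, integral_const_mul]
    at h
  linarith

theorem integral_cosh_mul_rpow_neg_add_two {s : ℝ} (hs : 0 < s) (a : ℝ) :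
    (s + 1) * ∫ x, cosh (a * x) ^ (-(s + 2)) = s * ∫ x, cosh (a * x) ^ (-s) := by
  have h (p : ℝ) : ∫ x, cosh (a * x) ^ p = |a⁻¹| * ∫ x, cosh x ^ p :=
    Measure.integral_comp_mul_left (fun x => cosh x ^ p) a
  rw [h, h, mul_left_comm, integral_cosh_rpow_neg_add_two hs, mul_left_comm]

lemma Q_rpow (p x : ℝ) : Q x ^ p = (5 / 2) ^ (p / 3) * cosh (3 / 2 * x) ^ (-(2 * p / 3)) := by
  have h52 : (0 : ℝ) ≤ 5 / 2 := by norm_num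
  have hc := (cosh_pos (3 * x / 2)).le
  rw [Q, mul_rpow (rpow_nonneg h52 _) (rpow_nonneg hc _), ← rpow_mul h52, ← rpow_mul hc]
  ring_nf

theorem Q_power_integral : ∀ r : ℝ, 1 ≤ r →
    ∫ x : ℝ, (Q x) ^ (r + 3) = (5 * r / (2 * r + 3)) * ∫ x : ℝ, (Q x) ^ r := by
  intro r hr
  have hQ_add_three (x : ℝ) : Q x ^ (r + 3) =
      5 / 2 * ((5 / 2) ^ (r / 3) * cosh (3 / 2 * x) ^ (-(2 * r / 3 + 2))) := by
    rw [Q_rpow, add_div, div_self three_ne_zero, rpow_add_one (by norm_num)]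
    ring_nf
  have hrec : ∫ x, cosh (3 / 2 * x) ^ (-(2 * r / 3 + 2)) =
      2 * r / (2 * r + 3) * ∫ x, cosh (3 / 2 * x) ^ (-(2 * r / 3)) := by
    have hred := integral_cosh_mul_rpow_neg_add_two (show 0 < 2 * r / 3 by linarith) (3 / 2)
    rw [div_mul_eq_mul_div, eq_div_iff (by positivity)]
    linear_combination 3 * hred
  simp_rw [hQ_add_three, Q_rpow, integral_const_mul, hrec]
  ring
end

section
/- ∫_ℝ e^{-x} Q(x)^4 dx = 2·10^{1/3}. -/
open Real MeasureTheory Filter Set Topology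

/-!
Since `cosh (3x/2) = e^{-3x/2} (1 + e^{3x}) / 2`, the integrand equals
`10^{4/3} e^{3x} (1 + e^{3x})^{-8/3}`, the derivative of `-(10^{4/3}/5) (1 + e^{3x})^{-5/3}`.
This antiderivative increases from `-10^{4/3}/5` at `-∞` to `0` at `+∞`, so the integral is
`10^{4/3}/5 = 2 · 10^{1/3}`.
-/

theorem integral_of_hasDerivAt_of_nonneg {g g' : ℝ → ℝ} {m n : ℝ}
    (hderiv : ∀ x, HasDerivAt g (g' x) x) (hg' : ∀ x, 0 ≤ g' x)
    (hbot : Tendsto g atBot (𝓝 m)) (htop : Tendsto g atTop (𝓝 n)) :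
    ∫ x, g' x = n - m := by
  have hint : ∀ a b, IntervalIntegrable g' volume a b := fun a b =>
    intervalIntegral.intervalIntegrable_deriv_of_nonneg
      (fun x _ => (hderiv x).continuousAt.continuousWithinAt) (fun x _ => hderiv x)
      (fun x _ => hg' x)
  have hlim : Tendsto (fun t : ℝ => ∫ x in -t..t, g' x) atTop (𝓝 (n - m)) := by
    simp_rw [intervalIntegral.integral_eq_sub_of_hasDerivAt (fun x _ => hderiv x) (hint _ _)]
    exact htop.sub (hbot.comp tendsto_neg_atTop_atBot)
  refine integral_of_hasDerivAt_of_tendsto hderiv ?_ hbot htop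
  refine integrable_of_intervalIntegral_norm_tendsto (n - m) (fun t => ?_) tendsto_neg_atTop_atBot
    tendsto_id ?_
  · exact (hint (-t) t).def'.mono_set Ioc_subset_uIoc
  · simpa only [Real.norm_of_nonneg (hg' _), id] using hlim

lemma Q_pow_four (x : ℝ) :
    Q x ^ 4 = (5/2 : ℝ) ^ ((4:ℝ)/3) * cosh (3*x/2) ^ (-(8:ℝ)/3) := by
  have hc := (cosh_pos (3*x/2)).le
  rw [Q, mul_pow, ← rpow_natCast, ← rpow_natCast (_ ^ _), ← rpow_mul (by norm_num), ← rpow_mul hc]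
  norm_num

lemma cosh_half_eq_exp_neg_mul (x : ℝ) : cosh (x / 2) = exp (-(x / 2)) * ((1 + exp x) / 2) := by
  rw [cosh_eq, mul_div, mul_add, ← exp_add, mul_one]; ring_nf

lemma exp_neg_mul_Q_pow_four (x : ℝ) :
    exp (-x) * Q x ^ 4 = (10:ℝ) ^ ((4:ℝ)/3) * (exp (3*x) * (1 + exp (3*x)) ^ (-(5/3 + 1 : ℝ))) := by
  rw [Q_pow_four, cosh_half_eq_exp_neg_mul, mul_rpow (exp_pos _).le (by positivity), ← exp_mul,
    div_rpow (x := 1 + exp (3*x)) (by positivity) (by norm_num)]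
  have hexp : exp (-x) * exp (-(3*x/2) * (-(8:ℝ)/3)) = exp (3*x) := by
    rw [← exp_add]; ring_nf
  have hconst : (5/2 : ℝ) ^ ((4:ℝ)/3) / 2 ^ (-(8:ℝ)/3) = 10 ^ ((4:ℝ)/3) := by
    rw [neg_div, rpow_neg (by norm_num), div_inv_eq_mul, show (8:ℝ)/3 = 2 * (4/3) by norm_num,
      rpow_mul (by norm_num), ← mul_rpow (by norm_num) (by positivity)]
    norm_num
  rw [show -(5/3 + 1 : ℝ) = -(8:ℝ)/3 by norm_num, ← hconst]
  generalize (1 + exp (3*x)) ^ (-(8:ℝ)/3) = A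
  rw [← hexp]
  ring

lemma hasDerivAt_rpow_one_add_exp {b s : ℝ} (hb : b ≠ 0) (hs : s ≠ 0) (x : ℝ) :
    HasDerivAt (fun x => -(1 / (b * s)) * (1 + exp (b * x)) ^ (-s))
      (exp (b * x) * (1 + exp (b * x)) ^ (-(s + 1))) x := by
  have hinner : HasDerivAt (fun x => 1 + exp (b * x)) (exp (b * x) * b) x :=
    (((hasDerivAt_id x).const_mul b).exp.const_add 1).congr_deriv (by simp)
  refine ((hinner.rpow_const (p := -s) (Or.inl (by positivity))).const_mul
    (-(1 / (b * s)))).congr_deriv ?_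
  rw [show -s - 1 = -(s + 1) by ring]
  field_simp

theorem integral_exp_mul_one_add_exp_rpow {b s : ℝ} (hb : 0 < b) (hs : 0 < s) :
    ∫ x, exp (b * x) * (1 + exp (b * x)) ^ (-(s + 1)) = 1 / (b * s) := by
  have h1 : Tendsto (fun x => 1 + exp (b * x)) atBot (𝓝 1) := by
    simpa using ((tendsto_exp_atBot.comp (tendsto_id.const_mul_atBot hb)).const_add 1)
  have h2 : Tendsto (fun x => 1 + exp (b * x)) atTop atTop :=
    tendsto_atTop_add_const_left _ 1 (tendsto_exp_atTop.comp (tendsto_id.const_mul_atTop hb))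
  have hbot : Tendsto (fun x => -(1 / (b * s)) * (1 + exp (b * x)) ^ (-s)) atBot
      (𝓝 (-(1 / (b * s)) * 1 ^ (-s))) :=
    (((continuousAt_rpow_const 1 (-s) (Or.inl one_ne_zero)).tendsto.comp h1).const_mul _)
  have htop : Tendsto (fun x => -(1 / (b * s)) * (1 + exp (b * x)) ^ (-s)) atTop
      (𝓝 (-(1 / (b * s)) * 0)) :=
    ((tendsto_rpow_neg_atTop hs).comp h2).const_mul _
  rw [integral_of_hasDerivAt_of_nonneg (hasDerivAt_rpow_one_add_exp hb.ne' hs.ne')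
    (fun x => by positivity) hbot htop]
  simp

theorem exp_Q4_integral :
    ∫ x : ℝ, Real.exp (-x) * (Q x)^4 = 2 * (10:ℝ) ^ ((1:ℝ)/3) := by
  simp_rw [exp_neg_mul_Q_pow_four]
  rw [integral_const_mul, integral_exp_mul_one_add_exp_rpow (by norm_num) (by norm_num),
    show (4:ℝ)/3 = 1 + 1/3 by norm_num, rpow_add (by norm_num), rpow_one]
  ring
end

section
/- Fix μ₀ > 0, Y₀ ∈ ℝ and α > 0 with μ₀ = √α · e^{-Y₀/2}. The function Y(t) = Y₀ + 2·ln(cosh(μ₀ t)) satisfies Ÿ(t) = 2α e^{-Y(t)} for all t, Ẏ(0) = 0, Ẏ(t) → ±2μ₀ as t → ±∞, and moreover 0 ≤ Y(t) - (Y₀ + 2μ₀|t| - 2 ln 2) ≤ 2 e^{-2μ₀|t|} for all t ∈ ℝ. -/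
/-!
`Ẏ = 2 μ₀ tanh (μ₀ t)` and `Ÿ = 2 μ₀² / cosh² (μ₀ t)`, while `e^{-Y} = e^{-Y₀} / cosh² (μ₀ t)`;
so the ODE is exactly the relation `μ₀² = α e^{-Y₀}`, and the limits of `Ẏ` are those of `tanh`.
For the asymptotics, `cosh x = e^{|x|} (1 + e^{-2|x|}) / 2` gives
`log cosh x - (|x| - log 2) = log (1 + e^{-2|x|})`, which lies in `[0, e^{-2|x|}]`.
-/

open Real Filter Topology

namespace Real

lemma hasDerivAt_tanh (x : ℝ) : HasDerivAt tanh (1 / cosh x ^ 2) x := by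
  rw [show tanh = sinh / cosh from funext tanh_eq_sinh_div_cosh]
  refine ((hasDerivAt_sinh x).div (hasDerivAt_cosh x) (cosh_pos x).ne').congr_deriv ?_
  rw [← cosh_sq_sub_sinh_sq x]
  ring

lemma hasDerivAt_log_cosh (x : ℝ) : HasDerivAt (fun y => log (cosh y)) (tanh x) x := by
  simpa [tanh_eq_sinh_div_cosh] using (hasDerivAt_cosh x).log (cosh_pos x).ne'

lemma tanh_eq_one_sub (x : ℝ) : tanh x = 1 - 2 / (exp (2 * x) + 1) := by
  have hx : exp (2 * x) = exp x * exp x := by rw [← exp_add, two_mul]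
  rw [tanh_eq, exp_neg, hx]
  field_simp
  ring

lemma tendsto_tanh_atTop : Tendsto tanh atTop (𝓝 1) := by
  have hexp : Tendsto (fun x => exp (2 * x) + 1) atTop atTop :=
    tendsto_atTop_add_const_right _ 1 <|
      tendsto_exp_atTop.comp (tendsto_id.const_mul_atTop two_pos)
  rw [show tanh = _ from funext tanh_eq_one_sub]
  simpa using
    (tendsto_const_nhds (x := (1 : ℝ))).sub (tendsto_const_nhds (x := (2 : ℝ)) |>.div_atTop hexp)

lemma tendsto_tanh_atBot : Tendsto tanh atBot (𝓝 (-1)) := by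
  simpa [Function.comp_def] using (tendsto_tanh_atTop.comp tendsto_neg_atBot_atTop).neg

lemma log_cosh_eq (x : ℝ) : log (cosh x) = |x| - log 2 + log (1 + exp (-2 * |x|)) := by
  have h : cosh x = exp |x| * (1 + exp (-2 * |x|)) / 2 := by
    rw [← cosh_abs, cosh_eq, mul_add, mul_one, ← exp_add]
    ring_nf
  rw [h, log_div (by positivity) two_ne_zero, log_mul (exp_pos _).ne' (by positivity), log_exp]
  ring

lemma log_cosh_sub_abs_add_log_two_mem_Icc (x : ℝ) :
    log (cosh x) - (|x| - log 2) ∈ Set.Icc 0 (exp (-2 * |x|)) := by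
  have hu := exp_pos (-2 * |x|)
  rw [log_cosh_eq, add_sub_cancel_left]
  constructor
  · exact log_nonneg (by linarith)
  · linarith [log_le_sub_one_of_pos (by linarith : 0 < 1 + exp (-2 * |x|))]

end Real

section LogCoshProfile

variable (Y₀ μ : ℝ)

lemma deriv_const_add_two_mul_log_cosh_mul :
    deriv (fun t => Y₀ + 2 * log (cosh (μ * t))) = fun t => 2 * μ * tanh (μ * t) := by
  funext t
  have h : HasDerivAt (fun t => log (cosh (μ * t))) (tanh (μ * t) * μ) t :=
    (hasDerivAt_log_cosh (μ * t)).comp t (hasDerivAt_const_mul μ)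
  rw [((h.const_mul 2).const_add Y₀).deriv]
  ring

lemma deriv_const_mul_tanh_mul (t : ℝ) :
    deriv (fun t => 2 * μ * tanh (μ * t)) t = 2 * μ ^ 2 / cosh (μ * t) ^ 2 := by
  have h : HasDerivAt (fun t => tanh (μ * t)) (1 / cosh (μ * t) ^ 2 * μ) t :=
    (hasDerivAt_tanh (μ * t)).comp t (hasDerivAt_const_mul μ)
  rw [(h.const_mul (2 * μ)).deriv]
  ring

lemma exp_neg_const_add_two_mul_log_cosh (x : ℝ) :
    exp (-(Y₀ + 2 * log (cosh x))) = exp (-Y₀) / cosh x ^ 2 := by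
  rw [neg_add, exp_add, two_mul, neg_add, exp_add, exp_neg (log _), exp_log (cosh_pos x)]
  ring

end LogCoshProfile

theorem Y_ode_general (α μ₀ Y₀ : ℝ) (hμ : 0 < μ₀)
    (hrel : μ₀ ^ 2 = α * Real.exp (-Y₀)) :
    let Y : ℝ → ℝ := fun t => Y₀ + 2 * Real.log (Real.cosh (μ₀ * t))
    (∀ t : ℝ, deriv (deriv Y) t = 2 * α * Real.exp (-Y t)) ∧
    deriv Y 0 = 0 ∧
    Filter.Tendsto (deriv Y) Filter.atTop (nhds (2 * μ₀)) ∧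
    Filter.Tendsto (deriv Y) Filter.atBot (nhds (-(2 * μ₀))) ∧
    (∀ t : ℝ, 0 ≤ Y t - (Y₀ + 2 * μ₀ * |t| - 2 * Real.log 2) ∧
      Y t - (Y₀ + 2 * μ₀ * |t| - 2 * Real.log 2) ≤ 2 * Real.exp (-2 * μ₀ * |t|)) := by
  intro Y
  have hY' : deriv Y = fun t => 2 * μ₀ * tanh (μ₀ * t) :=
    deriv_const_add_two_mul_log_cosh_mul Y₀ μ₀
  refine ⟨fun t => ?_, by simp [hY'], ?_, ?_, fun t => ?_⟩
  · rw [hY', deriv_const_mul_tanh_mul, exp_neg_const_add_two_mul_log_cosh, hrel]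
    ring
  · simpa [hY'] using
      (tendsto_tanh_atTop.comp (tendsto_id.const_mul_atTop hμ)).const_mul (2 * μ₀)
  · simpa [hY'] using
      (tendsto_tanh_atBot.comp (tendsto_id.const_mul_atBot hμ)).const_mul (2 * μ₀)
  · have habs : |μ₀ * t| = μ₀ * |t| := by rw [abs_mul, abs_of_pos hμ]
    obtain ⟨hlo, hhi⟩ := log_cosh_sub_abs_add_log_two_mem_Icc (μ₀ * t)
    rw [habs, ← mul_assoc] at hhi
    rw [habs] at hlo
    constructor <;> dsimp only [Y] <;> linarith

theorem Y_ode (α μ₀ Y₀ : ℝ) (hα : 0 < α) (hμ : 0 < μ₀)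
    (hrel : μ₀ ^ 2 = α * Real.exp (-Y₀)) :
    let Y : ℝ → ℝ := fun t => Y₀ + 2 * Real.log (Real.cosh (μ₀ * t))
    (∀ t : ℝ, deriv (deriv Y) t = 2 * α * Real.exp (-Y t)) ∧
    deriv Y 0 = 0 ∧
    Filter.Tendsto (deriv Y) Filter.atTop (nhds (2 * μ₀)) ∧
    Filter.Tendsto (deriv Y) Filter.atBot (nhds (-(2 * μ₀))) ∧
    (∀ t : ℝ, 0 ≤ Y t - (Y₀ + 2 * μ₀ * |t| - 2 * Real.log 2) ∧
      Y t - (Y₀ + 2 * μ₀ * |t| - 2 * Real.log 2) ≤ 2 * Real.exp (-2 * μ₀ * |t|)) :=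
  Y_ode_general α μ₀ Y₀ hμ hrel
end
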